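/- arXiv:2506.12725 — 6 statements merged into one kernel-verified Lean document; each statement's English description precedes it below -/
import Mathlib

section
/- Any policy π* that maximizes π(y_w)/(λπ(y_l)+(1-λ)π_ref(y_l)) (i.e., minimizes the BDPO loss) also maximizes the DPO objective ratio π(y_w)/π(y_l) interpreted in the extended reals (with x/0 = ∞ for x > 0); but there exists a policy maximizing the DPO ratio that does not maximize the BDPO objective. -/
/-- Any policy π* maximizing the BDPO objective
π(y_w)/(λπ(y_l)+(1-λ)π_ref(y_l)) also maximizes the DPO ratio π(y_w)/π(y_l)
in the extended nonnegative reals (x/0 = ∞ for x > 0); but there exists a policy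
maximizing the DPO ratio that does not maximize the BDPO objective. -/
theorem bdpo_implies_dpo_optimal_not_conversely {Y : Type*} [Fintype Y]
    (yw yl : Y) (hne : yw ≠ yl) (hcard : 3 ≤ Fintype.card Y)
    (πref : Y → ℝ) (hrefnn : ∀ y, 0 ≤ πref y) (hrefsum : ∑ y, πref y = 1)
    (hrefl : 0 < πref yl) (lam : ℝ) (hlam : lam ∈ Set.Ioo (0 : ℝ) 1) :
    (∀ π : Y → ℝ, (∀ y, 0 ≤ π y) → (∑ y, π y) = 1 →
      (∀ π' : Y → ℝ, (∀ y, 0 ≤ π' y) → (∑ y, π' y) = 1 →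
        π' yw / (lam * π' yl + (1 - lam) * πref yl) ≤
        π yw / (lam * π yl + (1 - lam) * πref yl)) →
      (∀ π' : Y → ℝ, (∀ y, 0 ≤ π' y) → (∑ y, π' y) = 1 →
        ENNReal.ofReal (π' yw) / ENNReal.ofReal (π' yl) ≤
        ENNReal.ofReal (π yw) / ENNReal.ofReal (π yl)))
    ∧
    (∃ π : Y → ℝ, (∀ y, 0 ≤ π y) ∧ (∑ y, π y) = 1 ∧
      (∀ π' : Y → ℝ, (∀ y, 0 ≤ π' y) → (∑ y, π' y) = 1 →
        ENNReal.ofReal (π' yw) / ENNReal.ofReal (π' yl) ≤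
        ENNReal.ofReal (π yw) / ENNReal.ofReal (π yl)) ∧
      ¬ (∀ π' : Y → ℝ, (∀ y, 0 ≤ π' y) → (∑ y, π' y) = 1 →
        π' yw / (lam * π' yl + (1 - lam) * πref yl) ≤
        π yw / (lam * π yl + (1 - lam) * πref yl))) := by
  classical
  obtain ⟨hlam0, hlam1⟩ := hlam
  have hr : 0 < πref yl := hrefl
  have h1l : 0 < 1 - lam := by linarith
  have hδnn : ∀ y, 0 ≤ (Pi.single yw 1 : Y → ℝ) y := by
    intro y
    by_cases h : y = yw
    · subst h; rw [Pi.single_eq_same]; norm_num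
    · simp [Pi.single_eq_of_ne h]
  have hδsum : ∑ y, (Pi.single yw 1 : Y → ℝ) y = 1 := by
    simp [Finset.sum_pi_single']
  have hδw : (Pi.single yw 1 : Y → ℝ) yw = 1 := Pi.single_eq_same yw 1
  have hδl : (Pi.single yw 1 : Y → ℝ) yl = 0 := Pi.single_eq_of_ne (Ne.symm hne) 1
  constructor
  · intro π hnn hsum hmax π' _ _
    -- compare with the point mass at yw
    have key := hmax (Pi.single yw 1) hδnn hδsum
    rw [hδw, hδl] at key
    have hD : 0 < lam * π yl + (1 - lam) * πref yl := by
      have := mul_nonneg hlam0.le (hnn yl)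
      nlinarith
    have hD0 : 0 < (1 - lam) * πref yl := by positivity
    rw [mul_zero, zero_add] at key
    rw [div_le_div_iff₀ hD0 hD] at key
    have hw1 : π yw ≤ 1 := by
      rw [← hsum]
      exact Finset.single_le_sum (fun y _ => hnn y) (Finset.mem_univ yw)
    have hπl : π yl = 0 := by nlinarith [hnn yl, mul_nonneg hlam0.le (hnn yl)]
    have hπw : 0 < π yw := by nlinarith
    rw [hπl, ENNReal.ofReal_zero, ENNReal.div_zero (ne_of_gt (ENNReal.ofReal_pos.2 hπw))]
    exact le_top
  · -- pick a third element
    obtain ⟨y3, h3⟩ : ∃ y3, y3 ∉ ({yw, yl} : Finset Y) := by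
      have hc : ({yw, yl} : Finset Y).card ≤ 2 := by
        apply le_trans (Finset.card_insert_le _ _)
        simp
      have : (({yw, yl} : Finset Y)ᶜ).Nonempty := by
        rw [← Finset.card_pos, Finset.card_compl]
        omega
      obtain ⟨y3, hy3⟩ := this
      exact ⟨y3, Finset.mem_compl.mp hy3⟩
    simp only [Finset.mem_insert, Finset.mem_singleton, not_or] at h3
    obtain ⟨h3w, h3l⟩ := h3
    refine ⟨(Pi.single yw (1/2) : Y → ℝ) + (Pi.single y3 (1/2) : Y → ℝ), ?_, ?_, ?_, ?_⟩
    · intro y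
      have h1 : (0:ℝ) ≤ (Pi.single yw (1/2) : Y → ℝ) y := by
        by_cases h : y = yw
        · subst h; rw [Pi.single_eq_same]; norm_num
        · simp [Pi.single_eq_of_ne h]
      have h2 : (0:ℝ) ≤ (Pi.single y3 (1/2) : Y → ℝ) y := by
        by_cases h : y = y3
        · subst h; rw [Pi.single_eq_same]; norm_num
        · simp [Pi.single_eq_of_ne h]
      simp only [Pi.add_apply]
      linarith
    · simp only [Pi.add_apply]
      rw [Finset.sum_add_distrib]
      simp [Finset.sum_pi_single']
      norm_num
    · intro π' _ _
      have hl : (Pi.single yw (1/2) : Y → ℝ) yl + (Pi.single y3 (1/2) : Y → ℝ) yl = 0 := by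
        rw [Pi.single_eq_of_ne (Ne.symm hne), Pi.single_eq_of_ne (fun h => h3l h.symm)]
        ring
      have hw : (Pi.single yw (1/2) : Y → ℝ) yw + (Pi.single y3 (1/2) : Y → ℝ) yw = 1/2 := by
        rw [Pi.single_eq_same, Pi.single_eq_of_ne (fun h => h3w h.symm)]
        ring
      simp only [Pi.add_apply]
      rw [hl, hw, ENNReal.ofReal_zero,
        ENNReal.div_zero (ne_of_gt (ENNReal.ofReal_pos.2 (by norm_num)))]
      exact le_top
    · intro hmax
      have key := hmax (Pi.single yw 1) hδnn hδsum
      rw [hδw, hδl] at key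
      have hl : (Pi.single yw (1/2) : Y → ℝ) yl + (Pi.single y3 (1/2) : Y → ℝ) yl = 0 := by
        rw [Pi.single_eq_of_ne (Ne.symm hne), Pi.single_eq_of_ne (fun h => h3l h.symm)]
        ring
      have hw : (Pi.single yw (1/2) : Y → ℝ) yw + (Pi.single y3 (1/2) : Y → ℝ) yw = 1/2 := by
        rw [Pi.single_eq_same, Pi.single_eq_of_ne (fun h => h3w h.symm)]
        ring
      simp only [Pi.add_apply] at key
      rw [hl, hw, mul_zero, zero_add] at key
      have hD0 : 0 < (1 - lam) * πref yl := by positivity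
      rw [div_le_div_iff₀ hD0 hD0] at key
      nlinarith
end

section
/- If a sequence of policies π_0, π_1, π_2, ... starts at π_0 = π_ref and the BDPO objective value π_t(y_w)/(λπ_t(y_l)+(1-λ)π_ref(y_l)) is monotonically nondecreasing in t, then for every t we have π_t(y_w) ≥ (1-λ)·π_ref(y_w). -/
/-- If a sequence of policies starts at π_ref and the BDPO objective
value is monotonically nondecreasing, then π_t(y_w) ≥ (1-λ)·π_ref(y_w) for all t. -/
theorem bdpo_chosen_lower_bound {Y : Type*} [Fintype Y] (yw yl : Y) (hne : yw ≠ yl)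
    (πref : Y → ℝ) (hrefnn : ∀ y, 0 ≤ πref y) (hrefsum : ∑ y, πref y = 1)
    (hrefl : 0 < πref yl) (lam : ℝ) (hlam : lam ∈ Set.Ioo (0 : ℝ) 1)
    (π : ℕ → Y → ℝ) (hnn : ∀ t y, 0 ≤ π t y) (hsum : ∀ t, (∑ y, π t y) = 1)
    (hinit : π 0 = πref)
    (hmono : Monotone fun t => π t yw / (lam * π t yl + (1 - lam) * πref yl)) :
    ∀ t, (1 - lam) * πref yw ≤ π t yw := by
  obtain ⟨hl0, hl1⟩ := hlam
  intro t
  have hD : 0 < lam * π t yl + (1 - lam) * πref yl := by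
    have := hnn t yl
    nlinarith
  have h0 := hmono (Nat.zero_le t)
  simp only [hinit] at h0
  have hden0 : lam * πref yl + (1 - lam) * πref yl = πref yl := by ring
  rw [hden0] at h0
  have h1 : πref yw / πref yl * (lam * π t yl + (1 - lam) * πref yl) ≤ π t yw := by
    have := mul_le_mul_of_nonneg_right h0 hD.le
    rwa [div_mul_cancel₀ _ hD.ne'] at this
  have h2 : (1 - lam) * πref yw ≤ πref yw / πref yl * (lam * π t yl + (1 - lam) * πref yl) := by
    have hw := hrefnn yw
    have hlw := hnn t yl
    have : πref yw / πref yl * (lam * π t yl + (1 - lam) * πref yl)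
        = πref yw / πref yl * (lam * π t yl) + (1 - lam) * πref yw := by
      field_simp
    rw [this]
    have : 0 ≤ πref yw / πref yl * (lam * π t yl) := by positivity
    linarith
  linarith
end

section
/- The DPO loss L(p,q) = -log σ(β(log(p/a) - log(q/b))) has no global minimum on the open domain {(p,q) : p,q ∈ (0,1), p+q ≤ 1}, and its infimum over this domain is 0. -/
noncomputable def sigmoid (x : ℝ) : ℝ := 1 / (1 + Real.exp (-x))

lemma neg_log_sigmoid (t : ℝ) :
    -Real.log (sigmoid t) = Real.log (1 + Real.exp (-t)) := by
  have h : (0:ℝ) < 1 + Real.exp (-t) := by positivity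
  rw [sigmoid, Real.log_div one_ne_zero h.ne', Real.log_one]
  ring

lemma loss_pos (t : ℝ) : 0 < -Real.log (sigmoid t) := by
  rw [neg_log_sigmoid]
  have : (1:ℝ) < 1 + Real.exp (-t) := by
    have := Real.exp_pos (-t); linarith
  exact Real.log_pos this

lemma key_small (a b β : ℝ) (ha : a ∈ Set.Ioo (0:ℝ) 1) (hb : b ∈ Set.Ioo (0:ℝ) 1)
    (hβ : 0 < β) (ε : ℝ) (hε : 0 < ε) :
    ∃ w ∈ {pq : ℝ × ℝ | pq.1 ∈ Set.Ioo (0 : ℝ) 1 ∧ pq.2 ∈ Set.Ioo (0 : ℝ) 1 ∧ pq.1 + pq.2 ≤ 1},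
      -Real.log (sigmoid (β * (Real.log (w.1 / a) - Real.log (w.2 / b)))) < ε := by
  obtain ⟨ha0, ha1⟩ := ha
  obtain ⟨hb0, hb1⟩ := hb
  set T : ℝ := max 0 (-Real.log (Real.exp ε - 1)) + 1 with hTdef
  have hTm : -Real.log (Real.exp ε - 1) ≤ max 0 (-Real.log (Real.exp ε - 1)) := le_max_right _ _
  have hT0 : 0 < T := by have := le_max_left 0 (-Real.log (Real.exp ε - 1)); simp [hTdef]; linarith
  set q : ℝ := min (b / (2*a) * Real.exp (-T/β)) (1/2) with hqdef
  have hq0 : 0 < q := lt_min (by positivity) (by norm_num)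
  have hqh : q ≤ 1/2 := min_le_right _ _
  refine ⟨(1/2, q), ⟨⟨by norm_num, by norm_num⟩, ⟨hq0, by linarith⟩, by simp; linarith⟩, ?_⟩
  rw [neg_log_sigmoid]
  -- bound the argument from below by T
  have hlogq : Real.log q ≤ Real.log b - Real.log 2 - Real.log a - T/β := by
    have h1 : q ≤ b / (2*a) * Real.exp (-T/β) := min_le_left _ _
    have h2 : Real.log q ≤ Real.log (b / (2*a) * Real.exp (-T/β)) :=
      Real.log_le_log hq0 h1
    have h3 : Real.log (b / (2*a) * Real.exp (-T/β)) =
        Real.log b - (Real.log 2 + Real.log a) + (-T/β) := by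
      rw [Real.log_mul (by positivity) (Real.exp_ne_zero _), Real.log_exp,
        Real.log_div hb0.ne' (by positivity), Real.log_mul (by norm_num) ha0.ne']
    rw [h3, neg_div] at h2; linarith
  have harg : T ≤ β * (Real.log ((1/2 : ℝ) / a) - Real.log (q / b)) := by
    have e1 : Real.log ((1/2 : ℝ) / a) = -Real.log 2 - Real.log a := by
      rw [Real.log_div (by norm_num) ha0.ne', one_div, Real.log_inv]
    have e2 : Real.log (q / b) = Real.log q - Real.log b :=
      Real.log_div hq0.ne' hb0.ne'
    rw [e1, e2]
    have h4 : T/β ≤ -Real.log 2 - Real.log a - (Real.log q - Real.log b) := by linarith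
    calc T = β * (T/β) := by field_simp
    _ ≤ β * (-Real.log 2 - Real.log a - (Real.log q - Real.log b)) :=
        mul_le_mul_of_nonneg_left h4 hβ.le
  -- now conclude
  have hexpε : (0:ℝ) < Real.exp ε - 1 := by
    have := Real.add_one_lt_exp hε.ne'
    linarith
  set t := β * (Real.log ((1/2 : ℝ) / a) - Real.log (q / b)) with htdef
  have h5 : -t < Real.log (Real.exp ε - 1) := by
    have : -Real.log (Real.exp ε - 1) < T := by linarith
    linarith
  have h6 : Real.exp (-t) < Real.exp ε - 1 := by
    calc Real.exp (-t) < Real.exp (Real.log (Real.exp ε - 1)) := Real.exp_lt_exp.mpr h5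
    _ = Real.exp ε - 1 := Real.exp_log hexpε
  have h7 : 1 + Real.exp (-t) < Real.exp ε := by linarith
  calc Real.log (1 + Real.exp (-t)) < Real.log (Real.exp ε) :=
      Real.log_lt_log (by positivity) h7
  _ = ε := Real.log_exp ε

/-- The DPO loss has no global minimum on
{(p,q) : p,q ∈ (0,1), p+q ≤ 1}, and its infimum over this domain is 0. -/
theorem dpo_loss_no_min (a b β : ℝ) (ha : a ∈ Set.Ioo (0 : ℝ) 1)
    (hb : b ∈ Set.Ioo (0 : ℝ) 1) (hβ : 0 < β) :
    (¬ ∃ z ∈ {pq : ℝ × ℝ | pq.1 ∈ Set.Ioo (0 : ℝ) 1 ∧ pq.2 ∈ Set.Ioo (0 : ℝ) 1 ∧ pq.1 + pq.2 ≤ 1},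
      ∀ w ∈ {pq : ℝ × ℝ | pq.1 ∈ Set.Ioo (0 : ℝ) 1 ∧ pq.2 ∈ Set.Ioo (0 : ℝ) 1 ∧ pq.1 + pq.2 ≤ 1},
        -Real.log (sigmoid (β * (Real.log (z.1 / a) - Real.log (z.2 / b)))) ≤
        -Real.log (sigmoid (β * (Real.log (w.1 / a) - Real.log (w.2 / b)))))
    ∧
    IsGLB ((fun pq : ℝ × ℝ =>
        -Real.log (sigmoid (β * (Real.log (pq.1 / a) - Real.log (pq.2 / b))))) ''
      {pq : ℝ × ℝ | pq.1 ∈ Set.Ioo (0 : ℝ) 1 ∧ pq.2 ∈ Set.Ioo (0 : ℝ) 1 ∧ pq.1 + pq.2 ≤ 1}) 0 := by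
  constructor
  · rintro ⟨z, hz, hmin⟩
    obtain ⟨w, hw, hlt⟩ := key_small a b β ha hb hβ
      (-Real.log (sigmoid (β * (Real.log (z.1 / a) - Real.log (z.2 / b)))))
      (loss_pos _)
    exact absurd (hmin w hw) (not_le.mpr hlt)
  · constructor
    · rintro y ⟨w, hw, rfl⟩
      exact (loss_pos _).le
    · intro lb hlb
      by_contra hpos
      push_neg at hpos
      obtain ⟨w, hw, hlt⟩ := key_small a b β ha hb hβ lb hpos
      exact absurd (hlb ⟨w, hw, rfl⟩) (not_le.mpr hlt)
end

section
/- The partial derivative of the BDPO loss L_B(p,q) = -log σ(β log(p/(λq+(1-λ)b)) - c) with respect to q equals β·σ(-(β log(p/(λq+(1-λ)b)) - c))·λ/(λq+(1-λ)b), and this derivative is uniformly bounded above by βλ/((1-λ)b) for all (p,q) ∈ (0,1]×[0,1]. -/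
/-!
Writing `D q = λ q + (1 - λ) b`, the loss is `ℓ (β log (p / D q) - c)` with `ℓ = -log σ`.
Since `σ' = σ (1 - σ)` and `1 - σ x = σ (-x)`, we get `ℓ' x = -σ (-x)`, while the inner function
has derivative `-β λ / D q`; the chain rule gives the formula. The bound follows from `σ ≤ 1`
and `D q ≥ (1 - λ) b` for `q ≥ 0`.
-/

theorem sigmoid_eq_real_sigmoid : sigmoid = Real.sigmoid :=
  funext fun _ => one_div _

theorem sigmoid_le_one (x : ℝ) : sigmoid x ≤ 1 :=
  sigmoid_eq_real_sigmoid ▸ Real.sigmoid_le_one x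

theorem hasDerivAt_neg_log_sigmoid (x : ℝ) :
    HasDerivAt (fun x => -Real.log (sigmoid x)) (-sigmoid (-x)) x := by
  rw [sigmoid_eq_real_sigmoid]
  refine ((Real.hasDerivAt_sigmoid x).log (Real.sigmoid_pos x).ne').neg.congr_deriv ?_
  rw [Real.sigmoid_neg]
  field_simp [(Real.sigmoid_pos x).ne']

theorem HasDerivAt.log_const_div {f : ℝ → ℝ} {f' x : ℝ} (p : ℝ) (hf : HasDerivAt f f' x)
    (hp : p ≠ 0) (hx : f x ≠ 0) :
    HasDerivAt (fun y => Real.log (p / f y)) (-(f' / f x)) x := by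
  refine (((hasDerivAt_const x p).div hf hx).log (div_ne_zero hp hx)).congr_deriv ?_
  simp only [Pi.div_apply]
  field_simp
  ring

/-- The partial derivative of the BDPO loss
L_B(p,q) = -log σ(β log(p/(λq+(1-λ)b)) - c) with respect to q equals
β·σ(-(β log(p/(λq+(1-λ)b)) - c))·λ/(λq+(1-λ)b), and this derivative is
uniformly bounded above by βλ/((1-λ)b) for all (p,q) ∈ (0,1]×[0,1]. -/
theorem bdpo_loss_deriv_rejected_bounded (b β lam c : ℝ) (hb : b ∈ Set.Ioo (0 : ℝ) 1)
    (hβ : 0 < β) (hlam : lam ∈ Set.Ioo (0 : ℝ) 1) :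
    ∀ p ∈ Set.Ioc (0 : ℝ) 1, ∀ q ∈ Set.Icc (0 : ℝ) 1,
      HasDerivAt
        (fun q => -Real.log (sigmoid (β * Real.log (p / (lam * q + (1 - lam) * b)) - c)))
        (β * sigmoid (-(β * Real.log (p / (lam * q + (1 - lam) * b)) - c)) *
          (lam / (lam * q + (1 - lam) * b))) q
      ∧
      β * sigmoid (-(β * Real.log (p / (lam * q + (1 - lam) * b)) - c)) *
          (lam / (lam * q + (1 - lam) * b)) ≤ β * lam / ((1 - lam) * b) := by
  intro p hp q hq
  have hfloor : 0 < (1 - lam) * b := mul_pos (by linarith [hlam.2]) hb.1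
  have hD : (1 - lam) * b ≤ lam * q + (1 - lam) * b := by nlinarith [hlam.1, hq.1]
  have hdenom : HasDerivAt (fun q => lam * q + (1 - lam) * b) lam q := by
    simpa using ((hasDerivAt_id q).const_mul lam).add_const ((1 - lam) * b)
  have hinner := ((hdenom.log_const_div p hp.1.ne' (by linarith)).const_mul β).sub_const c
  refine ⟨?_, ?_⟩
  · exact ((hasDerivAt_neg_log_sigmoid _).comp q hinner).congr_deriv (by ring)
  · calc β * sigmoid (-(β * Real.log (p / (lam * q + (1 - lam) * b)) - c)) *
          (lam / (lam * q + (1 - lam) * b))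
        ≤ β * 1 * (lam / (lam * q + (1 - lam) * b)) := by
          gcongr
          · exact div_nonneg hlam.1.le (by linarith)
          · exact sigmoid_le_one _
      _ ≤ β * lam / ((1 - lam) * b) := by
          rw [mul_one, mul_div_assoc]
          gcongr
          exact hlam.1.le
end

section
/- For the global minimizer of the BDPO loss over policies: if π* minimizes L_BDPO, then the DPO margin β·log(π*(y_w)/π*(y_l)) equals +∞ (in the extended reals), i.e., π*(y_l) = 0 while π*(y_w) > 0. -/
/-!
The objective `π yw / (lam * π yl + (1 - lam) * πref yl)` has a positive denominator everywhere
on the simplex. The point mass at `yw` gives it a positive value, so a maximizer has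
`π yw > 0`; and moving all of the mass at `yl` onto `yw` raises the numerator and lowers the
denominator, strictly so as soon as `π yl > 0`, so a maximizer has `π yl = 0`.
-/

open Finset

section MoveMass

variable {ι : Type*} [DecidableEq ι]

def moveMass (π : ι → ℝ) (a b : ι) : ι → ℝ :=
  π + Pi.single b (π a) - Pi.single a (π a)

variable {a b : ι}

theorem moveMass_apply_source (π : ι → ℝ) (hab : a ≠ b) : moveMass π a b a = 0 := by
  simp [moveMass, hab]

theorem moveMass_apply_target (π : ι → ℝ) (hab : a ≠ b) :
    moveMass π a b b = π b + π a := by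
  simp [moveMass, hab.symm]

theorem moveMass_mem_stdSimplex [Fintype ι] {π : ι → ℝ} (hπ : π ∈ stdSimplex ℝ ι) (hab : a ≠ b) :
    moveMass π a b ∈ stdSimplex ℝ ι := by
  obtain ⟨hnn, hsum⟩ := hπ
  refine ⟨fun y => ?_, ?_⟩
  · rcases eq_or_ne y a with rfl | hya
    · rw [moveMass_apply_source π hab]
    · rcases eq_or_ne y b with rfl | hyb
      · rw [moveMass_apply_target π hab]
        exact add_nonneg (hnn y) (hnn a)
      · simpa [moveMass, hya, hyb] using hnn y
  · simp [moveMass, sum_sub_distrib, sum_add_distrib, hsum]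

end MoveMass

theorem div_lt_add_div_of_pos {lam c p q : ℝ} (hlam : 0 ≤ lam) (hc : 0 < c) (hp : 0 ≤ p)
    (hq : 0 < q) : p / (lam * q + c) < (p + q) / (lam * 0 + c) := by
  rw [mul_zero, zero_add, div_lt_div_iff₀ (by positivity) hc]
  nlinarith [mul_nonneg (mul_nonneg hlam hp) hq.le, mul_nonneg hlam (sq_nonneg q)]

theorem bdpo_minimizer_infinite_margin_general {Y : Type*} [Fintype Y] (yw yl : Y) (hne : yw ≠ yl)
    (πref : Y → ℝ)
    (hrefl : 0 < πref yl)
    (lam : ℝ) (hlam : lam ∈ Set.Ioo (0 : ℝ) 1)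
    (π : Y → ℝ) (hnn : ∀ y, 0 ≤ π y) (hsum : ∑ y, π y = 1)
    (hmax : ∀ π' : Y → ℝ, (∀ y, 0 ≤ π' y) → (∑ y, π' y) = 1 →
      π' yw / (lam * π' yl + (1 - lam) * πref yl) ≤
      π yw / (lam * π yl + (1 - lam) * πref yl)) :
    π yl = 0 ∧ 0 < π yw := by
  classical
  obtain ⟨hlam0, hlam1⟩ := hlam
  have hc : 0 < (1 - lam) * πref yl := mul_pos (sub_pos.mpr hlam1) hrefl
  have hden : 0 < lam * π yl + (1 - lam) * πref yl := by
    have := mul_nonneg hlam0.le (hnn yl)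
    linarith
  have hmax' : ∀ π' ∈ stdSimplex ℝ Y, _ := fun π' hπ' => hmax π' hπ'.1 hπ'.2
  have hw : 0 < π yw := by
    have hpoint := hmax' _ (single_mem_stdSimplex ℝ yw)
    rw [Pi.single_eq_same, Pi.single_eq_of_ne hne.symm] at hpoint
    have hpos : 0 < 1 / (lam * 0 + (1 - lam) * πref yl) := by positivity
    exact (div_pos_iff_of_pos_right hden).mp (hpos.trans_le hpoint)
  refine ⟨?_, hw⟩
  by_contra hl
  have hmove := hmax' _ (moveMass_mem_stdSimplex ⟨hnn, hsum⟩ hne.symm)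
  rw [moveMass_apply_source π hne.symm, moveMass_apply_target π hne.symm] at hmove
  exact hmove.not_gt <|
    div_lt_add_div_of_pos hlam0.le hc (hnn yw) ((hnn yl).lt_of_ne' hl)

/-- If π* minimizes the BDPO loss (equivalently, maximizes the objective
π(y_w)/(λπ(y_l)+(1-λ)π_ref(y_l))), then the DPO margin β·log(π*(y_w)/π*(y_l)) is +∞,
i.e., π*(y_l) = 0 while π*(y_w) > 0. -/
theorem bdpo_minimizer_infinite_margin {Y : Type*} [Fintype Y] (yw yl : Y) (hne : yw ≠ yl)
    (πref : Y → ℝ) (hrefnn : ∀ y, 0 ≤ πref y) (hrefsum : ∑ y, πref y = 1)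
    (hrefl : 0 < πref yl) (hrefw : 0 < πref yw)
    (lam β : ℝ) (hlam : lam ∈ Set.Ioo (0 : ℝ) 1) (hβ : 0 < β)
    (π : Y → ℝ) (hnn : ∀ y, 0 ≤ π y) (hsum : ∑ y, π y = 1)
    (hmax : ∀ π' : Y → ℝ, (∀ y, 0 ≤ π' y) → (∑ y, π' y) = 1 →
      π' yw / (lam * π' yl + (1 - lam) * πref yl) ≤
      π yw / (lam * π yl + (1 - lam) * πref yl)) :
    π yl = 0 ∧ 0 < π yw :=
  bdpo_minimizer_infinite_margin_general yw yl hne πref hrefl lam hlam π hnn hsum hmax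
end

section
/- The DPOP loss L_P(p,q) = -log σ(β(log(p/a) - log(q/b)) - μ·max(0, -β log(p/a))) still has infimum 0 on (0,1)², attained in the limit q → 0⁺ with p = a fixed; i.e., the penalty term does not prevent the degenerate solution where only the rejected probability is driven to 0. -/
lemma sigmoid_pos (x : ℝ) : 0 < sigmoid x := by
  unfold sigmoid
  positivity

lemma sigmoid_lt_one (x : ℝ) : sigmoid x < 1 := by
  unfold sigmoid
  rw [div_lt_one (by positivity)]
  linarith [Real.exp_pos (-x)]

lemma neg_log_sigmoid_nonneg (x : ℝ) : 0 ≤ -Real.log (sigmoid x) := by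
  have := Real.log_nonpos (le_of_lt (sigmoid_pos x)) (le_of_lt (sigmoid_lt_one x))
  linarith

lemma sigmoid_tendsto : Filter.Tendsto sigmoid Filter.atTop (nhds 1) := by
  unfold sigmoid
  have h1 : Filter.Tendsto (fun x : ℝ => 1 + Real.exp (-x)) Filter.atTop (nhds 1) := by
    have := Real.tendsto_exp_atBot.comp (Filter.tendsto_neg_atBot_iff.mpr Filter.tendsto_id)
    simpa using Filter.Tendsto.const_add 1 this
  have := h1.inv₀ (by norm_num)
  simpa [one_div] using this

/-- The DPOP loss
L_P(p,q) = -log σ(β(log(p/a) - log(q/b)) - μ·max(0, -β log(p/a)))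
has infimum 0 on (0,1)², attained in the limit q → 0⁺ with p = a fixed. -/
theorem dpop_loss_infimum_zero (a b β μ : ℝ) (ha : a ∈ Set.Ioo (0 : ℝ) 1)
    (hb : b ∈ Set.Ioo (0 : ℝ) 1) (hβ : 0 < β) (hμ : 0 < μ) :
    IsGLB ((fun pq : ℝ × ℝ =>
        -Real.log (sigmoid (β * (Real.log (pq.1 / a) - Real.log (pq.2 / b)) -
          μ * max 0 (-(β * Real.log (pq.1 / a)))))) ''
      (Set.Ioo (0 : ℝ) 1 ×ˢ Set.Ioo (0 : ℝ) 1)) 0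
    ∧
    Filter.Tendsto (fun q =>
        -Real.log (sigmoid (β * (Real.log (a / a) - Real.log (q / b)) -
          μ * max 0 (-(β * Real.log (a / a))))))
      (nhdsWithin 0 (Set.Ioi 0)) (nhds 0) := by
  have ha0 : a ≠ 0 := ne_of_gt ha.1
  have hlaa : Real.log (a / a) = 0 := by rw [div_self ha0, Real.log_one]
  -- tendsto part
  have harg : Filter.Tendsto (fun q : ℝ =>
      β * (Real.log (a / a) - Real.log (q / b)) - μ * max 0 (-(β * Real.log (a / a))))
      (nhdsWithin 0 (Set.Ioi 0)) Filter.atTop := by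
    simp only [hlaa, zero_sub, mul_zero, neg_zero, max_self, sub_zero]
    have hdiv : Filter.Tendsto (fun q : ℝ => q / b)
        (nhdsWithin 0 (Set.Ioi 0)) (nhdsWithin 0 (Set.Ioi 0)) := by
      refine tendsto_nhdsWithin_of_tendsto_nhds_of_eventually_within _ ?_ ?_
      · exact ((continuous_id.div_const b).tendsto' 0 0 (by simp)).mono_left nhdsWithin_le_nhds
      · filter_upwards [self_mem_nhdsWithin] with q hq
        exact div_pos hq hb.1
    have hlog : Filter.Tendsto (fun q : ℝ => Real.log (q / b))
        (nhdsWithin 0 (Set.Ioi 0)) Filter.atBot :=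
      Real.tendsto_log_nhdsGT_zero.comp hdiv
    have hneg : Filter.Tendsto (fun q : ℝ => -Real.log (q / b))
        (nhdsWithin 0 (Set.Ioi 0)) Filter.atTop := Filter.tendsto_neg_atTop_iff.mpr hlog
    exact hneg.const_mul_atTop hβ
  have htend : Filter.Tendsto (fun q =>
      -Real.log (sigmoid (β * (Real.log (a / a) - Real.log (q / b)) -
        μ * max 0 (-(β * Real.log (a / a))))))
      (nhdsWithin 0 (Set.Ioi 0)) (nhds 0) := by
    have h1 := (Real.continuousAt_log (by norm_num : (1:ℝ) ≠ 0)).tendsto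
    have h2 := (sigmoid_tendsto.comp harg)
    have := ((Real.continuousAt_log (by norm_num : (1:ℝ) ≠ 0)).tendsto.comp h2)
    simpa [Real.log_one] using this.neg
  refine ⟨⟨?_, ?_⟩, htend⟩
  · rintro x ⟨pq, _, rfl⟩
    exact neg_log_sigmoid_nonneg _
  · intro c hc
    have hmem : ∀ᶠ q in nhdsWithin (0:ℝ) (Set.Ioi 0), c ≤
        -Real.log (sigmoid (β * (Real.log (a / a) - Real.log (q / b)) -
          μ * max 0 (-(β * Real.log (a / a))))) := by
      filter_upwards [Ioo_mem_nhdsGT_of_mem (Set.left_mem_Ico.mpr one_pos)] with q hq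
      exact hc ⟨(a, q), ⟨ha, hq.1, hq.2⟩, rfl⟩
    exact ge_of_tendsto htend hmem
end
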